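/- Assume A is quadratik and faithful, and let Γ, Γ′ : G → Aut(B) be two group homomorphisms into the ℂ-algebra automorphisms of B, each making the upper-left corner embedding of A into B G-equivariant (i.e. for each of them there is a group homomorphism into the ℂ-algebra automorphisms of A, say α resp. α′, with Γ_g(L_a·E₁₁) = L_{α_g(a)}·E₁₁ and Γ′_g(L_a·E₁₁) = L_{α′_g(a)}·E₁₁ for all g, a). If Γ_g and Γ′_g agree on the first column of Mₙ(A) for every g ∈ G, then Γ = Γ′. In other words, such a G-action on B is uniquely determined by its restriction to the first column of Mₙ(A). -/

import Mathlib

/-- An algebra `A` is *quadratik* if every element of `A` is a finite sum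
`a₁b₁ + … + a_kb_k` of products of elements of `A`. -/
def IsQuadratik (A : Type*) [NonUnitalNonAssocSemiring A] : Prop :=
  ∀ x : A, ∃ l : List (A × A), x = (l.map fun p => p.1 * p.2).sum

/-- An algebra `A` is *faithful* if `a·b = 0` for all `b` implies `a = 0`. -/
def IsFaithful (A : Type*) [Mul A] [Zero A] : Prop :=
  ∀ a : A, (∀ b : A, a * b = 0) → a = 0

/-- Left multiplication `L_a : A → A`, `L_a(x) = a·x`, as a `ℂ`-linear
endomorphism of `A` (an element of `𝓛_A(A)`). -/
def Lmul {A : Type*} [NonUnitalRing A] [Module ℂ A] [SMulCommClass ℂ A A]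
    (a : A) : Module.End ℂ A where
  toFun x := a * x
  map_add' := mul_add a
  map_smul' c x := mul_smul_comm c a x

/-- Membership in `𝓛_A(A)`: a `ℂ`-linear endomorphism `T` of `A` belongs to
`𝓛_A(A)` iff it is right `A`-linear (`T(ab) = T(a)·b`) and adjointable (for all
`a` there is `d` with `a·T(x) = d·x` for all `x`). -/
def MemLA {A : Type*} [NonUnitalRing A] [Module ℂ A]
    (T : Module.End ℂ A) : Prop :=
  (∀ a b : A, T (a * b) = T a * b) ∧ ∀ a : A, ∃ d : A, ∀ x : A, a * T x = d * x

/-- A matrix over `𝓛_A(A)` (i.e. over `Module.End ℂ A`) belongs to the copy of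
`Mₙ(A)` iff all its entries are left multiplications `L_a` with `a ∈ A`. -/
def InMnA {A : Type*} [NonUnitalRing A] [Module ℂ A] [SMulCommClass ℂ A A]
    {n : ℕ} (X : Matrix (Fin n) (Fin n) (Module.End ℂ A)) : Prop :=
  ∀ i j, ∃ a : A, X i j = Lmul a

/-- The upper-left corner copy of `A` in `Mₙ(𝓛_A(A))`: `a ↦ L_a·E₁₁`. -/
def cornerA {A : Type*} [NonUnitalRing A] [Module ℂ A] [SMulCommClass ℂ A A]
    {n : ℕ} [NeZero n] (a : A) : Matrix (Fin n) (Fin n) (Module.End ℂ A) :=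
  Matrix.of fun i j => if i = 0 ∧ j = 0 then Lmul a else 0

/-- Identification of `Aⁿ` with the first column of `Mₙ(A)`: the vector `ξ`
corresponds to the matrix whose first column has entries `L_{ξᵢ}` and whose
other entries vanish. -/
def colMat {A : Type*} [NonUnitalRing A] [Module ℂ A] [SMulCommClass ℂ A A]
    {n : ℕ} [NeZero n] (ξ : Fin n → A) :
    Matrix (Fin n) (Fin n) (Module.End ℂ A) :=
  Matrix.of fun i j => if j = 0 then Lmul (ξ i) else 0

lemma Lmul_zero {A : Type*} [NonUnitalRing A] [Module ℂ A]
    [SMulCommClass ℂ A A] : Lmul (0 : A) = 0 := by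
  ext x
  exact zero_mul x

lemma cornerA_inMnA {A : Type*} [NonUnitalRing A] [Module ℂ A]
    [SMulCommClass ℂ A A] {n : ℕ} [NeZero n] (a : A) :
    InMnA (cornerA (n := n) a) := by
  intro i j
  by_cases h : i = 0 ∧ j = 0
  · exact ⟨a, by simp [cornerA, h]⟩
  · exact ⟨0, by simp [cornerA, h, Lmul_zero]⟩

lemma colMat_inMnA {A : Type*} [NonUnitalRing A] [Module ℂ A]
    [SMulCommClass ℂ A A] {n : ℕ} [NeZero n] (ξ : Fin n → A) :
    InMnA (colMat ξ) := by
  intro i j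
  by_cases h : j = 0
  · exact ⟨ξ i, by simp [colMat, h]⟩
  · exact ⟨0, by simp [colMat, h, Lmul_zero]⟩


/-!
Right multiplication by a corner element `L_c·E₁₁` sends every `x ∈ B` into the first column
(the entries of `x` are right `A`-linear), and since `A` is quadratik the first column is
additively generated by such products. Hence an automorphism preserving the corner copy of `A`
preserves the first column `C`, which is a left ideal of `B`. If `Γ_g = Γ'_g` on `C`, write
`y ∈ C` as `Γ_g t` with `t = Γ_{g⁻¹} y ∈ C`; then
`Γ_g x · y = Γ_g (x t) = Γ'_g (x t) = Γ'_g x · Γ'_g t = Γ'_g x · y`.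
Because `A` is faithful, a matrix with right `A`-linear entries is determined by its products
with the first column, so `Γ_g x = Γ'_g x`.
-/

section LeftMultiplication

variable {A : Type*} [NonUnitalRing A] [Module ℂ A] [SMulCommClass ℂ A A]

@[simp]
lemma Lmul_apply (a x : A) : Lmul a x = a * x := rfl

lemma Lmul_add (a b : A) : Lmul (a + b) = Lmul a + Lmul b :=
  LinearMap.ext fun x => add_mul a b x

lemma Lmul_sum {ι : Type*} (s : Finset ι) (f : ι → A) :
    Lmul (∑ i ∈ s, f i) = ∑ i ∈ s, Lmul (f i) :=
  LinearMap.ext fun x => by simp [Finset.sum_mul]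

lemma Lmul_injective (hA : IsFaithful A) :
    Function.Injective (Lmul : A → Module.End ℂ A) := by
  intro a b h
  rw [← sub_eq_zero]
  exact hA _ fun x => by rw [sub_mul, ← Lmul_apply, h, Lmul_apply, sub_self]

lemma mul_Lmul {T : Module.End ℂ A} (hT : ∀ a b : A, T (a * b) = T a * b) (a : A) :
    T * Lmul a = Lmul (T a) :=
  LinearMap.ext (hT a)

end LeftMultiplication

section ColumnMatrices

variable {A : Type*} [NonUnitalRing A] [Module ℂ A] [SMulCommClass ℂ A A] {n : ℕ} [NeZero n]

def colMatAddHom : (Fin n → A) →+ Matrix (Fin n) (Fin n) (Module.End ℂ A) :=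
  AddMonoidHom.mk' colMat fun ξ η => by
    ext i j : 1
    by_cases hj : j = 0 <;> simp [colMat, hj, Lmul_add]

@[simp]
lemma colMatAddHom_apply (ξ : Fin n → A) : colMatAddHom ξ = colMat ξ := rfl

lemma colMat_injective (hA : IsFaithful A) :
    Function.Injective (colMat : (Fin n → A) → Matrix (Fin n) (Fin n) (Module.End ℂ A)) :=
  fun ξ η h => funext fun i => Lmul_injective hA <| by
    simpa [colMat] using congrFun (congrFun h i) 0

lemma colMat_apply_mul (ξ : Fin n → A) (i j : Fin n) (a b : A) :
    colMat ξ i j (a * b) = colMat ξ i j a * b := by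
  by_cases hj : j = 0 <;> simp [colMat, hj, mul_assoc]

lemma cornerA_eq_colMat (a : A) : cornerA (n := n) a = colMat (Pi.single 0 a) := by
  ext i j : 1
  by_cases hi : i = 0 <;> by_cases hj : j = 0 <;> simp [cornerA, colMat, hi, hj, Lmul_zero]

variable {X Y : Matrix (Fin n) (Fin n) (Module.End ℂ A)}

lemma mul_colMat (hX : ∀ i j, ∀ a b : A, X i j (a * b) = X i j a * b) (ζ : Fin n → A) :
    X * colMat ζ = colMat fun i => ∑ k, X i k (ζ k) := by
  ext i j : 1
  by_cases hj : j = 0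
  · simp [Matrix.mul_apply, colMat, hj, mul_Lmul (hX _ _), Lmul_sum]
  · simp [Matrix.mul_apply, colMat, hj]

lemma mul_colMat_single (hX : ∀ i j, ∀ a b : A, X i j (a * b) = X i j a * b)
    (k : Fin n) (a : A) :
    X * colMat (Pi.single k a) = colMat fun i => X i k a := by
  rw [mul_colMat hX]
  congr 1
  funext i
  simp only [Pi.apply_single (fun k => ⇑(X i k)) (fun k => map_zero (X i k)),
    Fintype.sum_pi_single']

lemma colMat_mul_cornerA (ξ : Fin n → A) (c : A) :
    colMat ξ * cornerA c = colMat fun i => ξ i * c := by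
  rw [cornerA_eq_colMat, mul_colMat_single (colMat_apply_mul ξ)]
  simp [colMat]

lemma eq_of_forall_mul_colMat_eq (hA : IsFaithful A)
    (hX : ∀ i j, ∀ a b : A, X i j (a * b) = X i j a * b)
    (hY : ∀ i j, ∀ a b : A, Y i j (a * b) = Y i j a * b)
    (h : ∀ η, X * colMat η = Y * colMat η) : X = Y := by
  ext i k a
  have hcol := h (Pi.single k a)
  rw [mul_colMat_single hX, mul_colMat_single hY] at hcol
  exact congrFun (colMat_injective hA hcol) i

end ColumnMatrices

lemma IsQuadratik.mem_closure_range_mul {A : Type*} [NonUnitalNonAssocSemiring A]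
    (hA : IsQuadratik A) (x : A) :
    x ∈ AddSubmonoid.closure (Set.range fun p : A × A => p.1 * p.2) := by
  obtain ⟨l, rfl⟩ := hA x
  refine AddSubmonoid.list_sum_mem _ fun y hy => ?_
  obtain ⟨p, -, rfl⟩ := List.mem_map.1 hy
  exact AddSubmonoid.subset_closure ⟨p, rfl⟩

lemma map_mem_closure_range_mul {R ι F : Type*} [NonUnitalNonAssocSemiring R] [FunLike F R R]
    [NonUnitalRingHomClass F R R] (φ : F) {k : ι → R} {β : ι → ι} (hk : ∀ i, φ (k i) = k (β i))
    {x : R} (hx : x ∈ AddSubmonoid.closure (Set.range fun p : R × ι => p.1 * k p.2)) :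
    φ x ∈ AddSubmonoid.closure (Set.range fun p : R × ι => p.1 * k p.2) := by
  refine (AddSubmonoid.closure_le (S := (AddSubmonoid.closure _).comap φ)).2 ?_ hx
  rintro _ ⟨⟨y, i⟩, rfl⟩
  exact AddSubmonoid.subset_closure ⟨(φ y, β i), by simp [hk]⟩

lemma apply_mul_eq_of_eqOn {M F : Type*} [Mul M] [FunLike F M M] [MulHomClass F M M] {φ ψ : F}
    {S : Set M} (hS : ∀ x, ∀ s ∈ S, x * s ∈ S) (hφS : S ⊆ φ '' S) (h : Set.EqOn φ ψ S) (x : M)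
    {s : M} (hs : s ∈ S) : φ x * s = ψ x * s := by
  obtain ⟨t, ht, rfl⟩ := hφS hs
  rw [← map_mul, h (hS x t ht), map_mul, h ht]

section FirstColumn

variable {A : Type*} [NonUnitalRing A] [Module ℂ A] [SMulCommClass ℂ A A] {n : ℕ} [NeZero n]
  {B : NonUnitalSubalgebra ℂ (Matrix (Fin n) (Fin n) (Module.End ℂ A))}
  (hMnA : ∀ X : Matrix (Fin n) (Fin n) (Module.End ℂ A), InMnA X → X ∈ B)

def colB : (Fin n → A) →+ B :=
  colMatAddHom.codRestrict B fun ξ => hMnA _ (colMat_inMnA ξ)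

def cornerB (a : A) : B := ⟨cornerA a, hMnA _ (cornerA_inMnA a)⟩

def firstColumn : AddSubmonoid B := AddMonoidHom.mrange (colB hMnA)

lemma colB_single_mul (i : Fin n) (a b : A) :
    colB hMnA (Pi.single i (a * b)) = colB hMnA (Pi.single i a) * cornerB hMnA b := by
  refine Subtype.ext ?_
  simp only [colB, cornerB, AddMonoidHom.codRestrict_apply, NonUnitalSubalgebra.coe_mul,
    colMatAddHom_apply]
  rw [colMat_mul_cornerA]
  exact congrArg colMat (funext fun j => Pi.single_mul_left_apply i j a fun _ => b)

variable (hright : ∀ x : B, ∀ i j, ∀ a b : A,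
  (x : Matrix (Fin n) (Fin n) (Module.End ℂ A)) i j (a * b) =
    (x : Matrix (Fin n) (Fin n) (Module.End ℂ A)) i j a * b)
include hright

lemma mul_mem_firstColumn (x : B) {y : B} (hy : y ∈ firstColumn hMnA) :
    x * y ∈ firstColumn hMnA := by
  obtain ⟨ξ, rfl⟩ := hy
  exact ⟨_, Subtype.ext (mul_colMat (hright x) ξ).symm⟩

lemma firstColumn_eq_closure (hquad : IsQuadratik A) :
    firstColumn hMnA =
      AddSubmonoid.closure (Set.range fun p : B × A => p.1 * cornerB hMnA p.2) := by
  refine le_antisymm ?_ (AddSubmonoid.closure_le.2 ?_)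
  · rintro _ ⟨ξ, rfl⟩
    rw [← Finset.univ_sum_single ξ, map_sum]
    refine sum_mem fun i _ => ?_
    refine (AddSubmonoid.closure_le (S := (AddSubmonoid.closure _).comap
      ((colB hMnA).comp (AddMonoidHom.single _ i)))).2 ?_ (hquad.mem_closure_range_mul (ξ i))
    rintro _ ⟨⟨a, b⟩, rfl⟩
    exact AddSubmonoid.subset_closure
      ⟨(colB hMnA (Pi.single i a), b), (colB_single_mul hMnA i a b).symm⟩
  · rintro _ ⟨⟨x, c⟩, rfl⟩
    refine mul_mem_firstColumn hMnA hright x ⟨Pi.single 0 c, Subtype.ext ?_⟩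
    exact (cornerA_eq_colMat c).symm

lemma firstColumn_subset_image (hquad : IsQuadratik A) {G : Type*} [Group G]
    (Δ : G →* RingAut B) (β : G → A → A)
    (hΔ : ∀ g a, Δ g (cornerB hMnA a) = cornerB hMnA (β g a)) (g : G) :
    (firstColumn hMnA : Set B) ⊆ Δ g '' firstColumn hMnA := by
  intro s hs
  refine ⟨Δ g⁻¹ s, ?_, ?_⟩
  · rw [SetLike.mem_coe, firstColumn_eq_closure hMnA hright hquad] at hs ⊢
    exact map_mem_closure_range_mul (Δ g⁻¹) (hΔ g⁻¹) hs
  · show (Δ g * Δ g⁻¹) s = s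
    rw [← map_mul, mul_inv_cancel, map_one]
    rfl

end FirstColumn

theorem stmt13_general (A : Type*) [NonUnitalRing A] [Module ℂ A]
    [SMulCommClass ℂ A A]
    (hquad : IsQuadratik A) (hfaith : IsFaithful A)
    (n : ℕ) [NeZero n]
    (G : Type*) [Group G]
    (B : NonUnitalSubalgebra ℂ (Matrix (Fin n) (Fin n) (Module.End ℂ A)))
    (hB : ∀ x : B, ∀ i j,
      MemLA ((x : Matrix (Fin n) (Fin n) (Module.End ℂ A)) i j))
    (hMnA : ∀ X : Matrix (Fin n) (Fin n) (Module.End ℂ A), InMnA X → X ∈ B)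
    (Γ Γ' : G →* RingAut B)
    (α : G →* RingAut A)
    (hequiv : ∀ (g : G) (a : A),
      ((Γ g ⟨cornerA a, hMnA _ (cornerA_inMnA a)⟩ : B) :
          Matrix (Fin n) (Fin n) (Module.End ℂ A)) = cornerA (α g a))
    (hagree : ∀ (g : G) (ξ : Fin n → A),
      Γ g ⟨colMat ξ, hMnA _ (colMat_inMnA ξ)⟩ =
        Γ' g ⟨colMat ξ, hMnA _ (colMat_inMnA ξ)⟩) :
    Γ = Γ' := by
  have hright := fun x i j => (hB x i j).1
  refine MonoidHom.ext fun g => RingEquiv.ext fun x => Subtype.ext ?_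
  refine eq_of_forall_mul_colMat_eq hfaith (hright _) (hright _) fun η => ?_
  have hEqOn : Set.EqOn (Γ g) (Γ' g) (firstColumn hMnA) := by
    rintro _ ⟨ξ, rfl⟩
    exact hagree g ξ
  have hsurj := firstColumn_subset_image hMnA hright hquad Γ (fun g => α g)
    (fun g a => Subtype.ext (hequiv g a)) g
  exact congrArg Subtype.val (apply_mul_eq_of_eqOn (mul_mem_firstColumn hMnA hright) hsurj
    hEqOn x ⟨η, rfl⟩)

/-- If `A` is quadratik and faithful and `Γ, Γ′ : G → Aut(B)` are two group
homomorphisms into the `ℂ`-algebra automorphisms of `B`, each making the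
upper-left corner embedding of `A` into `B` `G`-equivariant, and if `Γ_g` and
`Γ′_g` agree on the first column of `Mₙ(A)` for every `g`, then `Γ = Γ′`. -/
theorem stmt13 (A : Type*) [NonUnitalRing A] [Module ℂ A]
    [SMulCommClass ℂ A A] [IsScalarTower ℂ A A]
    (hquad : IsQuadratik A) (hfaith : IsFaithful A)
    (n : ℕ) [NeZero n]
    (G : Type*) [Group G]
    (B : NonUnitalSubalgebra ℂ (Matrix (Fin n) (Fin n) (Module.End ℂ A)))
    (hB : ∀ x : B, ∀ i j,
      MemLA ((x : Matrix (Fin n) (Fin n) (Module.End ℂ A)) i j))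
    (hMnA : ∀ X : Matrix (Fin n) (Fin n) (Module.End ℂ A), InMnA X → X ∈ B)
    (Γ Γ' : G →* RingAut B)
    (hΓlin : ∀ (g : G) (c : ℂ) (x : B), Γ g (c • x) = c • Γ g x)
    (hΓ'lin : ∀ (g : G) (c : ℂ) (x : B), Γ' g (c • x) = c • Γ' g x)
    (α α' : G →* RingAut A)
    (hαlin : ∀ (g : G) (c : ℂ) (a : A), α g (c • a) = c • α g a)
    (hα'lin : ∀ (g : G) (c : ℂ) (a : A), α' g (c • a) = c • α' g a)
    (hequiv : ∀ (g : G) (a : A),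
      ((Γ g ⟨cornerA a, hMnA _ (cornerA_inMnA a)⟩ : B) :
          Matrix (Fin n) (Fin n) (Module.End ℂ A)) = cornerA (α g a))
    (hequiv' : ∀ (g : G) (a : A),
      ((Γ' g ⟨cornerA a, hMnA _ (cornerA_inMnA a)⟩ : B) :
          Matrix (Fin n) (Fin n) (Module.End ℂ A)) = cornerA (α' g a))
    (hagree : ∀ (g : G) (ξ : Fin n → A),
      Γ g ⟨colMat ξ, hMnA _ (colMat_inMnA ξ)⟩ =
        Γ' g ⟨colMat ξ, hMnA _ (colMat_inMnA ξ)⟩) :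
    Γ = Γ' :=
  stmt13_general A hquad hfaith n G B hB hMnA Γ Γ' α hequiv hagree
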